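/- Let V₁, V₂ be subspaces of ℂ^n and W = V₂ ∩ V₁^⊥. Then Π_{V₂}^⊥ ∘ Π_{V₁}^⊥ = Π_{V₂ ∩ W^⊥}^⊥ ∘ Π_{W ⊕ V₁}^⊥, where Π_V^⊥ = 1 − Π_V denotes orthogonal projection onto V^⊥. -/

import Mathlib

/-! For orthogonal subspaces `U ⟂ V` the complementary projections multiply:
`1 - Π_{U ⊔ V} = (1 - Π_U)(1 - Π_V)`. Since `W ⟂ V₁` and `V₂` splits orthogonally as
`(V₂ ⊓ Wᗮ) ⊔ W`, both sides equal `(1 - Π_{V₂ ⊓ Wᗮ})(1 - Π_W)(1 - Π_{V₁})`. -/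

noncomputable def projc {n : ℕ} (V : Submodule ℂ (EuclideanSpace ℂ (Fin n))) :
    EuclideanSpace ℂ (Fin n) →L[ℂ] EuclideanSpace ℂ (Fin n) :=
  V.subtypeL.comp (V.orthogonalProjection)

namespace Submodule

variable {𝕜 E : Type*} [RCLike 𝕜] [NormedAddCommGroup E] [InnerProductSpace 𝕜 E]
  {U V : Submodule 𝕜 E} [U.HasOrthogonalProjection] [V.HasOrthogonalProjection]
  [(U ⊔ V).HasOrthogonalProjection]

theorem IsOrtho.starProjection_sup (h : U ⟂ V) :
    (U ⊔ V).starProjection = U.starProjection + V.starProjection := by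
  ext x
  refine eq_starProjection_of_mem_orthogonal'
    (add_mem_sup (starProjection_apply_mem U x) (starProjection_apply_mem V x))
    (z := x - U.starProjection x - V.starProjection x) ?_ (by simp only [add_apply]; abel)
  rw [← inf_orthogonal]
  refine ⟨sub_mem (sub_starProjection_mem_orthogonal x) (h.symm (starProjection_apply_mem V x)), ?_⟩
  rw [sub_right_comm]
  exact sub_mem (sub_starProjection_mem_orthogonal x) (h (starProjection_apply_mem U x))

theorem IsOrtho.one_sub_starProjection_sup (h : U ⟂ V) :
    1 - (U ⊔ V).starProjection = (1 - U.starProjection) ∘L (1 - V.starProjection) := by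
  have hUV : U.starProjection * V.starProjection = 0 := h.starProjection_comp_starProjection
  rw [h.starProjection_sup, ← ContinuousLinearMap.mul_def]
  simp only [mul_sub, sub_mul, one_mul, mul_one, hUV]
  abel

end Submodule

open Submodule in
theorem projPerp_comp_eq {n : ℕ} (V₁ V₂ : Submodule ℂ (EuclideanSpace ℂ (Fin n))) :
    (1 - projc V₂).comp (1 - projc V₁)
      = (1 - projc (V₂ ⊓ (V₂ ⊓ V₁ᗮ)ᗮ)).comp (1 - projc ((V₂ ⊓ V₁ᗮ) ⊔ V₁)) := by
  set W := V₂ ⊓ V₁ᗮ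
  set A := V₂ ⊓ Wᗮ
  have hWV₁ : W ⟂ V₁ := inf_le_right
  have hAW : A ⟂ W := inf_le_right
  have hV₂ : A ⊔ W = V₂ := by
    rw [sup_comm, show A = Wᗮ ⊓ V₂ from inf_comm _ _]
    exact sup_orthogonal_inf_of_hasOrthogonalProjection inf_le_left
  simp only [show ∀ V, projc V = V.starProjection from fun _ => rfl]
  calc (1 - V₂.starProjection) ∘L (1 - V₁.starProjection)
      = ((1 - A.starProjection) ∘L (1 - W.starProjection)) ∘L (1 - V₁.starProjection) := by
        rw [← hAW.one_sub_starProjection_sup]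
        simp only [hV₂]
    _ = (1 - A.starProjection) ∘L ((1 - W.starProjection) ∘L (1 - V₁.starProjection)) := rfl
    _ = (1 - A.starProjection) ∘L (1 - (W ⊔ V₁).starProjection) := by
        rw [hWV₁.one_sub_starProjection_sup]
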